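/- arXiv:2212.02369 — 3 statements merged into one kernel-verified Lean document; each statement's English description precedes it below -/
import Mathlib

section
/- For any fixed positive integer d, every positive integer n has as many partitions with λ₂ + λ_m = λ₁ + d as partitions with k₁ > k_m and λ_{m−1} = λ_m + d. -/
/-!
The triangle map `T₀` is a size-preserving bijection from `△₀` (`λ₁ < λ₂ + λ_m`) onto `M₀`
(`k₁ > k_m`): its new last part `λ₁ - λ₂` stays below its new penultimate part `λ_m` exactly when
`λ₁ < λ₂ + λ_m`, and its first multiplicity `k₁ + k₂` exceeds its last one `k₁`. The same two parts
show that `T₀` carries `λ₂ + λ_m - λ₁` to `λ_{m-1} - λ_m`, so it restricts to a bijection between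
the two sets counted in the theorem; `d > 0` puts the first of them inside `△₀`.
-/

/-- A partition `(λ₁,...,λ_m)×[k₁,...,k_m]`: strictly decreasing positive parts
with positive multiplicities, same length. -/
def IsPart (p : List ℕ × List ℕ) : Prop :=
  p.1.length = p.2.length ∧ List.Chain' (· > ·) p.1 ∧
  (∀ x ∈ p.1, 0 < x) ∧ (∀ x ∈ p.2, 0 < x)

/-- size of a partition: Σ kᵢ λᵢ -/
def psize (p : List ℕ × List ℕ) : ℕ := (List.zipWith (· * ·) p.1 p.2).sum

def parts1 (L : List ℕ) : ℕ := L.headD 0      -- λ₁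
def parts2 (L : List ℕ) : ℕ := L.tail.headD 0 -- λ₂
def parts3 (L : List ℕ) : ℕ := L.tail.tail.headD 0 -- λ₃
def partsLast (L : List ℕ) : ℕ := L.getLastD 0 -- λ_m
def partsPrelast (L : List ℕ) : ℕ := L.dropLast.getLastD 0 -- λ_{m-1}

def T0parts : List ℕ → List ℕ
  | a :: b :: t => b :: (t ++ [a - b])
  | l => l

def T0mults : List ℕ → List ℕ
  | a :: b :: t => (a + b) :: (t ++ [a])
  | l => l

def T1parts (L : List ℕ) : List ℕ := (parts1 L - partsLast L) :: L.tail

def T1mults (K : List ℕ) : List ℕ := K.dropLast ++ [K.headD 0 + K.getLastD 0]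

def TDparts (L : List ℕ) : List ℕ := L.tail

def TDmults : List ℕ → List ℕ
  | [a, b] => [2 * a + b]
  | a :: b :: t => (a + b) :: (t.dropLast ++ [a + t.getLastD 0])
  | l => l

def T0map (p : List ℕ × List ℕ) : List ℕ × List ℕ := (T0parts p.1, T0mults p.2)
def T1map (p : List ℕ × List ℕ) : List ℕ × List ℕ := (T1parts p.1, T1mults p.2)

/-- △₀ : partitions of dimension ≥ 2 with λ₁ < λ₂ + λ_m -/
def Tri0 : Set (List ℕ × List ℕ) :=
  {p | IsPart p ∧ 2 ≤ p.1.length ∧ parts1 p.1 < parts2 p.1 + partsLast p.1}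

/-- △₁ : partitions of dimension ≥ 2 with λ₁ > λ₂ + λ_m -/
def Tri1 : Set (List ℕ × List ℕ) :=
  {p | IsPart p ∧ 2 ≤ p.1.length ∧ parts2 p.1 + partsLast p.1 < parts1 p.1}

/-- M₀ : partitions of dimension ≥ 2 with k₁ > k_m -/
def M0 : Set (List ℕ × List ℕ) :=
  {p | IsPart p ∧ 2 ≤ p.1.length ∧ p.2.getLastD 0 < p.2.headD 0}

/-- M₁ : partitions of dimension ≥ 2 with k₁ < k_m -/
def M1 : Set (List ℕ × List ℕ) :=
  {p | IsPart p ∧ 2 ≤ p.1.length ∧ p.2.headD 0 < p.2.getLastD 0}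

/-- △_d^G : partitions with λ₂ + dλ_m < λ₁ < λ₂ + (d+1)λ_m -/
def GaussSet (d : ℕ) : Set (List ℕ × List ℕ) :=
  {p | IsPart p ∧ 2 ≤ p.1.length ∧
    parts2 p.1 + d * partsLast p.1 < parts1 p.1 ∧
    parts1 p.1 < parts2 p.1 + (d + 1) * partsLast p.1}

theorem Set.BijOn.ncard_sep {α β : Type*} {f : α → β} {s : Set α} {t : Set β}
    (hf : Set.BijOn f s t) {P : α → Prop} {Q : β → Prop} (hPQ : ∀ x ∈ s, Q (f x) ↔ P x) :
    {x ∈ s | P x}.ncard = {y ∈ t | Q y}.ncard := by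
  refine Set.BijOn.ncard_eq ⟨fun x hx => ⟨hf.mapsTo hx.1, (hPQ x hx.1).2 hx.2⟩,
    hf.injOn.mono fun x hx => hx.1, fun y hy => ?_⟩
  obtain ⟨x, hx, rfl⟩ := hf.surjOn hy.1
  exact ⟨x, ⟨hx, (hPQ x hx).1 hy.2⟩, rfl⟩

theorem List.isChain_cons_append_singleton_iff {α : Type*} {R : α → α → Prop} {a b : α}
    {l : List α} : (a :: (l ++ [b])).IsChain R ↔ (a :: l).IsChain R ∧ R (l.getLastD a) b := by
  rw [← List.cons_append, List.isChain_append]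
  simp [List.getLast?_cons]

theorem List.forall_mem_cons_append_singleton {α : Type*} {p : α → Prop} {a b : α}
    {l : List α} : (∀ x ∈ a :: (l ++ [b]), p x) ↔ p a ∧ (∀ x ∈ l, p x) ∧ p b := by
  rw [List.forall_mem_cons, List.forall_mem_append, List.forall_mem_singleton]

theorem isPart_iff {p : List ℕ × List ℕ} : IsPart p ↔ p.1.length = p.2.length ∧
    p.1.IsChain (· > ·) ∧ (∀ x ∈ p.1, 0 < x) ∧ (∀ x ∈ p.2, 0 < x) := Iff.rfl

-- `(λ₁,…,λ_m)×[k₁,…,k_m] ↦ (λ₁ + λ_m, λ₁,…,λ_{m-1})×[k_m, k₁ - k_m, k₂,…,k_{m-1}]`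
def T0inv (p : List ℕ × List ℕ) : List ℕ × List ℕ :=
  ((parts1 p.1 + partsLast p.1) :: p.1.dropLast,
    p.2.getLastD 0 :: (p.2.headD 0 - p.2.getLastD 0) :: p.2.tail.dropLast)

theorem IsPart.exists_eq_cons_cons {p : List ℕ × List ℕ} (hp : IsPart p) (h2 : 2 ≤ p.1.length) :
    ∃ a b t x y s, t.length = s.length ∧ p = (a :: b :: t, x :: y :: s) := by
  obtain ⟨L, K⟩ := p
  obtain ⟨hlen, -⟩ := hp
  match L, K, hlen, h2 with
  | a :: b :: t, x :: y :: s, hlen, _ => exact ⟨a, b, t, x, y, s, by simpa using hlen, rfl⟩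

theorem IsPart.exists_eq_cons_concat {p : List ℕ × List ℕ} (hp : IsPart p)
    (h2 : 2 ≤ p.1.length) :
    ∃ c u e x v l, u.length = v.length ∧ p = (c :: (u ++ [e]), x :: (v ++ [l])) := by
  obtain ⟨a, b, t, x, y, s, hts, rfl⟩ := hp.exists_eq_cons_cons h2
  obtain ⟨u, e, hu⟩ := (List.eq_nil_or_concat (b :: t)).resolve_left (List.cons_ne_nil _ _)
  obtain ⟨v, l, hv⟩ := (List.eq_nil_or_concat (y :: s)).resolve_left (List.cons_ne_nil _ _)
  rw [List.concat_eq_append] at hu hv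
  refine ⟨a, u, e, x, v, l, ?_, by rw [hu, hv]⟩
  have hu' := congrArg List.length hu
  have hv' := congrArg List.length hv
  simp only [List.length_cons, List.length_append] at hu' hv'
  omega

theorem IsPart.parts2_lt_parts1 {p : List ℕ × List ℕ} (hp : IsPart p) (h2 : 2 ≤ p.1.length) :
    parts2 p.1 < parts1 p.1 := by
  obtain ⟨a, b, t, x, y, s, -, rfl⟩ := hp.exists_eq_cons_cons h2
  exact (List.isChain_cons_cons.mp hp.2.1).1

theorem T0map_cons_cons (a b x y : ℕ) (t s : List ℕ) :
    T0map (a :: b :: t, x :: y :: s) = (b :: (t ++ [a - b]), (x + y) :: (s ++ [x])) := rfl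

theorem T0inv_cons_concat (c e x l : ℕ) (u v : List ℕ) :
    T0inv (c :: (u ++ [e]), x :: (v ++ [l])) = ((c + e) :: c :: u, l :: (x - l) :: v) := by
  simp [T0inv, parts1, partsLast, List.getLastD_cons, List.getLastD_concat,
    List.dropLast_cons_of_ne_nil, -List.getLastD_eq_getLast?]

theorem T0map_mem_M0 {p : List ℕ × List ℕ} (hp : p ∈ Tri0) : T0map p ∈ M0 := by
  obtain ⟨hpart, h2, hlt⟩ := hp
  obtain ⟨a, b, t, x, y, s, hts, rfl⟩ := hpart.exists_eq_cons_cons h2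
  simp only [isPart_iff, List.isChain_cons_cons, List.forall_mem_cons] at hpart
  obtain ⟨-, ⟨hba, hchain⟩, ⟨-, hb, ht⟩, hx, hy, hs⟩ := hpart
  simp only [parts1, parts2, partsLast, List.headD_cons, List.tail_cons, List.getLastD_cons] at hlt
  rw [T0map_cons_cons]
  refine ⟨isPart_iff.2 ⟨by simp [hts], ?_, ?_, ?_⟩, by simp, ?_⟩
  · exact List.isChain_cons_append_singleton_iff.2 ⟨hchain, by omega⟩
  · exact List.forall_mem_cons_append_singleton.2 ⟨hb, ht, by omega⟩
  · exact List.forall_mem_cons_append_singleton.2 ⟨by omega, hs, hx⟩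
  · rw [List.getLastD_cons, List.getLastD_concat, List.headD_cons]
    omega

theorem T0inv_mem_Tri0 {q : List ℕ × List ℕ} (hq : q ∈ M0) : T0inv q ∈ Tri0 := by
  obtain ⟨hpart, h2, hlt⟩ := hq
  obtain ⟨c, u, e, x, v, l, huv, rfl⟩ := hpart.exists_eq_cons_concat h2
  simp only [isPart_iff, List.isChain_cons_append_singleton_iff,
    List.forall_mem_cons_append_singleton] at hpart
  obtain ⟨-, ⟨hchain, hlast⟩, ⟨hc, hu, he⟩, -, hv, hl⟩ := hpart
  simp only [List.getLastD_cons, List.getLastD_concat, List.headD_cons] at hlt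
  rw [T0inv_cons_concat]
  refine ⟨isPart_iff.2 ⟨by simp [huv], ?_, ?_, ?_⟩, by simp, ?_⟩
  · exact List.isChain_cons_cons.2 ⟨by omega, hchain⟩
  · simp only [List.forall_mem_cons]
    exact ⟨by omega, hc, hu⟩
  · simp only [List.forall_mem_cons]
    exact ⟨hl, by omega, hv⟩
  · simp only [parts1, parts2, partsLast, List.headD_cons, List.tail_cons, List.getLastD_cons]
    omega

theorem T0inv_T0map {p : List ℕ × List ℕ} (hp : IsPart p) (h2 : 2 ≤ p.1.length) :
    T0inv (T0map p) = p := by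
  obtain ⟨a, b, t, x, y, s, -, rfl⟩ := hp.exists_eq_cons_cons h2
  have hba : b < a := hp.parts2_lt_parts1 h2
  rw [T0map_cons_cons, T0inv_cons_concat, Nat.add_sub_cancel' hba.le, Nat.add_sub_cancel_left]

theorem T0map_T0inv {q : List ℕ × List ℕ} (hq : IsPart q) (h2 : 2 ≤ q.1.length)
    (hk : q.2.getLastD 0 ≤ q.2.headD 0) : T0map (T0inv q) = q := by
  obtain ⟨c, u, e, x, v, l, -, rfl⟩ := hq.exists_eq_cons_concat h2
  simp only [List.getLastD_cons, List.getLastD_concat, List.headD_cons] at hk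
  rw [T0inv_cons_concat, T0map_cons_cons, Nat.add_sub_cancel_left, Nat.add_sub_cancel' hk]

theorem bijOn_T0map : Set.BijOn T0map Tri0 M0 :=
  Set.InvOn.bijOn
    ⟨fun _ hp => T0inv_T0map hp.1 hp.2.1, fun _ hq => T0map_T0inv hq.1 hq.2.1 hq.2.2.le⟩
    (fun _ => T0map_mem_M0) (fun _ => T0inv_mem_Tri0)

theorem psize_T0map {p : List ℕ × List ℕ} (hp : IsPart p) (h2 : 2 ≤ p.1.length) :
    psize (T0map p) = psize p := by
  obtain ⟨a, b, t, x, y, s, hts, rfl⟩ := hp.exists_eq_cons_cons h2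
  have hba : b < a := hp.parts2_lt_parts1 h2
  obtain ⟨c, rfl⟩ : ∃ c, a = b + c := ⟨a - b, by omega⟩
  simp only [T0map_cons_cons, psize, List.zipWith_cons_cons, List.zipWith_append hts,
    List.zipWith_nil_left, List.sum_cons, List.sum_append, List.sum_nil, add_tsub_cancel_left]
  ring

theorem partsPrelast_T0parts {L : List ℕ} (h2 : 2 ≤ L.length) :
    partsPrelast (T0parts L) = partsLast L := by
  match L, h2 with
  | a :: b :: t, _ => simp [T0parts, partsPrelast, partsLast, List.getLastD_cons,
      List.dropLast_cons_of_ne_nil, -List.getLastD_eq_getLast?]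

theorem partsLast_T0parts {L : List ℕ} (h2 : 2 ≤ L.length) :
    partsLast (T0parts L) = parts1 L - parts2 L := by
  match L, h2 with
  | a :: b :: t, _ =>
    simp [T0parts, partsLast, parts1, parts2, List.getLast?_cons, List.getLast?_append]

theorem stmt6_general (d n : ℕ) (hd : 0 < d) :
    {p : List ℕ × List ℕ | IsPart p ∧ 2 ≤ p.1.length ∧ psize p = n ∧
        parts2 p.1 + partsLast p.1 = parts1 p.1 + d}.ncard =
    {p : List ℕ × List ℕ | IsPart p ∧ 2 ≤ p.1.length ∧ psize p = n ∧
        p.2.getLastD 0 < p.2.headD 0 ∧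
        partsPrelast p.1 = partsLast p.1 + d}.ncard := by
  have hA : {p : List ℕ × List ℕ | IsPart p ∧ 2 ≤ p.1.length ∧ psize p = n ∧
        parts2 p.1 + partsLast p.1 = parts1 p.1 + d} =
      {p ∈ Tri0 | psize p = n ∧ parts2 p.1 + partsLast p.1 = parts1 p.1 + d} :=
    Set.ext fun _ => ⟨fun ⟨hp, h2, hn, he⟩ => ⟨⟨hp, h2, by omega⟩, hn, he⟩,
      fun ⟨⟨hp, h2, _⟩, hn, he⟩ => ⟨hp, h2, hn, he⟩⟩
  have hB : {p : List ℕ × List ℕ | IsPart p ∧ 2 ≤ p.1.length ∧ psize p = n ∧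
        p.2.getLastD 0 < p.2.headD 0 ∧ partsPrelast p.1 = partsLast p.1 + d} =
      {q ∈ M0 | psize q = n ∧ partsPrelast q.1 = partsLast q.1 + d} :=
    Set.ext fun _ => ⟨fun ⟨hp, h2, hn, hk, he⟩ => ⟨⟨hp, h2, hk⟩, hn, he⟩,
      fun ⟨⟨hp, h2, hk⟩, hn, he⟩ => ⟨hp, h2, hn, hk, he⟩⟩
  rw [hA, hB]
  refine bijOn_T0map.ncard_sep fun p ⟨hp, h2, _⟩ => ?_
  have h21 := hp.parts2_lt_parts1 h2
  rw [psize_T0map hp h2, T0map, partsPrelast_T0parts h2, partsLast_T0parts h2]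
  omega

theorem stmt6 (d n : ℕ) (hd : 0 < d) (hn : 0 < n) :
    {p : List ℕ × List ℕ | IsPart p ∧ 2 ≤ p.1.length ∧ psize p = n ∧
        parts2 p.1 + partsLast p.1 = parts1 p.1 + d}.ncard =
    {p : List ℕ × List ℕ | IsPart p ∧ 2 ≤ p.1.length ∧ psize p = n ∧
        p.2.getLastD 0 < p.2.headD 0 ∧
        partsPrelast p.1 = partsLast p.1 + d}.ncard :=
  stmt6_general d n hd
end

section
/- For any fixed positive integer d, every positive integer n has as many partitions with λ₁ = λ₂ + λ_m + d as partitions with k₁ < k_m and λ₁ = λ₂ + d. -/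
/-
`T1map` lowers `λ₁` by `λ_m` and raises `k_m` by `k₁`, which leaves `Σ kᵢλᵢ` unchanged. On partitions
with `λ₁ = λ₂ + λ_m + d` the new first part is `λ₂ + d`, still larger than `λ₂` because `d > 0`, and
the new multiplicities satisfy `k₁ < k₁ + k_m`. Raising `λ₁` by `λ_m` and lowering `k_m` by `k₁`
undoes this, so `T1map` is a bijection between the two sets.
-/

def T1inv (p : List ℕ × List ℕ) : List ℕ × List ℕ :=
  ((parts1 p.1 + partsLast p.1) :: p.1.tail, p.2.dropLast ++ [p.2.getLastD 0 - p.2.headD 0])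

def partitionsGapAddLast (d n : ℕ) : Set (List ℕ × List ℕ) :=
  {p | IsPart p ∧ 2 ≤ p.1.length ∧ psize p = n ∧ parts1 p.1 = parts2 p.1 + partsLast p.1 + d}

def partitionsGapMultLt (d n : ℕ) : Set (List ℕ × List ℕ) :=
  {p | IsPart p ∧ 2 ≤ p.1.length ∧ psize p = n ∧ p.2.headD 0 < p.2.getLastD 0 ∧
    parts1 p.1 = parts2 p.1 + d}

lemma partsLast_cons {R : List ℕ} (hR : R ≠ []) (a : ℕ) : partsLast (a :: R) = partsLast R := by
  obtain ⟨M, x, rfl⟩ := R.eq_nil_or_concat'.resolve_left hR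
  simp only [partsLast, List.getLastD_cons, List.getLastD_concat]

lemma psize_cons (x y : ℕ) (L K : List ℕ) : psize (x :: L, y :: K) = x * y + psize (L, K) := by
  simp [psize]

lemma psize_append_singleton {L K : List ℕ} (h : L.length = K.length) (x y : ℕ) :
    psize (L ++ [x], K ++ [y]) = psize (L, K) + x * y := by
  simp [psize, List.zipWith_append h]

lemma psize_shift {R N : List ℕ} (h : R.length = N.length + 1) (a k j : ℕ) :
    psize ((a + partsLast R) :: R, k :: (N ++ [j])) = psize (a :: R, k :: (N ++ [k + j])) := by
  obtain ⟨M, x, rfl⟩ := R.eq_nil_or_concat'.resolve_left (List.ne_nil_of_length_eq_add_one h)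
  have hMN : M.length = N.length := by simpa using h
  simp only [psize_cons, psize_append_singleton hMN, partsLast, List.getLastD_concat]
  ring

-- The first part is written as `a + λ_m`, so that the truncated subtraction in `T1parts` cancels.
lemma T1map_mk {R : List ℕ} (hR : R ≠ []) (a k : ℕ) (N : List ℕ) (j : ℕ) :
    T1map ((a + partsLast R) :: R, k :: (N ++ [j])) = (a :: R, k :: (N ++ [k + j])) := by
  have hK : k :: (N ++ [j]) = (k :: N) ++ [j] := rfl
  simp only [T1map, T1parts, T1mults, parts1, partsLast_cons hR, List.headD_cons, List.tail_cons,
    Nat.add_sub_cancel, hK, List.dropLast_concat, List.getLastD_concat]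
  rfl

lemma T1inv_mk {R : List ℕ} (hR : R ≠ []) (a k : ℕ) (N : List ℕ) (j : ℕ) :
    T1inv (a :: R, k :: (N ++ [k + j])) = ((a + partsLast R) :: R, k :: (N ++ [j])) := by
  have hK : k :: (N ++ [k + j]) = (k :: N) ++ [k + j] := rfl
  simp only [T1inv, parts1, partsLast_cons hR, List.headD_cons, List.tail_cons]
  rw [hK, List.dropLast_concat, List.getLastD_concat]
  simp

lemma headD_lt_getLastD_iff (k : ℕ) (N : List ℕ) (j : ℕ) :
    (k :: (N ++ [j])).headD 0 < (k :: (N ++ [j])).getLastD 0 ↔ k < j := by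
  rw [List.headD_cons, List.getLastD_cons, List.getLastD_concat]

lemma IsPart.exists_eq {p : List ℕ × List ℕ} (hp : IsPart p) (h : 2 ≤ p.1.length) :
    ∃ a b t k N j, p = (a :: b :: t, k :: (N ++ [j])) ∧ t.length = N.length := by
  obtain ⟨L, K⟩ := p
  obtain ⟨hlen, -⟩ := hp
  match L, K, hlen, h with
  | a :: b :: t, k :: K, hlen, _ =>
    obtain ⟨N, j, rfl⟩ := K.eq_nil_or_concat'.resolve_left (by rintro rfl; simp at hlen)
    exact ⟨a, b, t, k, N, j, rfl, by simpa using hlen⟩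

lemma IsPart.replace_ends {a b a' k j j' : ℕ} {t N : List ℕ}
    (hp : IsPart (a :: b :: t, k :: (N ++ [j]))) (ha : b < a') (hj : 0 < j') :
    IsPart (a' :: b :: t, k :: (N ++ [j'])) := by
  obtain ⟨hlen, hchain, hposL, hposK⟩ := hp
  refine ⟨by simpa using hlen, List.isChain_cons_cons.2 ⟨ha, (List.isChain_cons_cons.1 hchain).2⟩,
    ?_, ?_⟩
  · rintro x (_ | ⟨_, hx⟩)
    · omega
    · exact hposL x (.tail a hx)
  · simp only [List.mem_cons, List.mem_append] at hposK ⊢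
    grind

section Bijection

variable {d n : ℕ}

lemma exists_eq_of_mem_partitionsGapAddLast {p : List ℕ × List ℕ}
    (hp : p ∈ partitionsGapAddLast d n) : ∃ b t k N j,
      p = ((b + d + partsLast (b :: t)) :: b :: t, k :: (N ++ [j])) ∧ t.length = N.length := by
  obtain ⟨hpart, hlen, -, hgap⟩ := hp
  obtain ⟨a, b, t, k, N, j, rfl, htN⟩ := hpart.exists_eq hlen
  have ha : a = b + d + partsLast (b :: t) := by
    simp only [parts1, parts2, partsLast_cons (List.cons_ne_nil b t), List.headD_cons,
      List.tail_cons] at hgap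
    omega
  exact ⟨b, t, k, N, j, by rw [ha], htN⟩

lemma exists_eq_of_mem_partitionsGapMultLt {p : List ℕ × List ℕ}
    (hp : p ∈ partitionsGapMultLt d n) : ∃ b t k N e,
      p = ((b + d) :: b :: t, k :: (N ++ [k + e])) ∧ t.length = N.length ∧ 0 < e := by
  obtain ⟨hpart, hlen, -, hlt, hgap⟩ := hp
  obtain ⟨a, b, t, k, N, j, rfl, htN⟩ := hpart.exists_eq hlen
  rw [headD_lt_getLastD_iff] at hlt
  obtain ⟨e, rfl⟩ := Nat.exists_eq_add_of_le hlt.le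
  exact ⟨b, t, k, N, e, by rw [show a = b + d from hgap], htN, by omega⟩

lemma mapsTo_T1map (hd : 0 < d) :
    Set.MapsTo T1map (partitionsGapAddLast d n) (partitionsGapMultLt d n) := by
  intro p hp
  obtain ⟨b, t, k, N, j, rfl, htN⟩ := exists_eq_of_mem_partitionsGapAddLast hp
  obtain ⟨hpart, -, hsize, -⟩ := hp
  rw [T1map_mk (List.cons_ne_nil b t)]
  have hj : 0 < j := hpart.2.2.2 j (by simp)
  refine ⟨hpart.replace_ends (by omega) (by omega), by simp, ?_, ?_, rfl⟩
  · rw [← psize_shift (by simpa using htN), hsize]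
  · rw [headD_lt_getLastD_iff]
    omega

lemma mapsTo_T1inv (hd : 0 < d) :
    Set.MapsTo T1inv (partitionsGapMultLt d n) (partitionsGapAddLast d n) := by
  intro p hp
  obtain ⟨b, t, k, N, e, rfl, htN, he⟩ := exists_eq_of_mem_partitionsGapMultLt hp
  obtain ⟨hpart, -, hsize, -⟩ := hp
  rw [T1inv_mk (List.cons_ne_nil b t)]
  refine ⟨hpart.replace_ends (by omega) he, by simp, ?_, ?_⟩
  · rw [psize_shift (by simpa using htN), hsize]
  · simp only [parts1, parts2, partsLast_cons (List.cons_ne_nil b t), List.headD_cons,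
      List.tail_cons]
    ring

lemma leftInvOn_T1inv_T1map :
    Set.LeftInvOn T1inv T1map (partitionsGapAddLast d n) := by
  intro p hp
  obtain ⟨b, t, k, N, j, rfl, -⟩ := exists_eq_of_mem_partitionsGapAddLast hp
  rw [T1map_mk (List.cons_ne_nil b t), T1inv_mk (List.cons_ne_nil b t)]

lemma rightInvOn_T1inv_T1map :
    Set.RightInvOn T1inv T1map (partitionsGapMultLt d n) := by
  intro p hp
  obtain ⟨b, t, k, N, e, rfl, -⟩ := exists_eq_of_mem_partitionsGapMultLt hp
  rw [T1inv_mk (List.cons_ne_nil b t), T1map_mk (List.cons_ne_nil b t)]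

lemma bijOn_T1map (hd : 0 < d) :
    Set.BijOn T1map (partitionsGapAddLast d n) (partitionsGapMultLt d n) :=
  Set.InvOn.bijOn ⟨leftInvOn_T1inv_T1map, rightInvOn_T1inv_T1map⟩ (mapsTo_T1map hd)
    (mapsTo_T1inv hd)

end Bijection

theorem stmt7_general (d n : ℕ) (hd : 0 < d) :
    {p : List ℕ × List ℕ | IsPart p ∧ 2 ≤ p.1.length ∧ psize p = n ∧
        parts1 p.1 = parts2 p.1 + partsLast p.1 + d}.ncard =
    {p : List ℕ × List ℕ | IsPart p ∧ 2 ≤ p.1.length ∧ psize p = n ∧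
        p.2.headD 0 < p.2.getLastD 0 ∧
        parts1 p.1 = parts2 p.1 + d}.ncard :=
  (bijOn_T1map (n := n) hd).ncard_eq

theorem stmt7 (d n : ℕ) (hd : 0 < d) (hn : 0 < n) :
    {p : List ℕ × List ℕ | IsPart p ∧ 2 ≤ p.1.length ∧ psize p = n ∧
        parts1 p.1 = parts2 p.1 + partsLast p.1 + d}.ncard =
    {p : List ℕ × List ℕ | IsPart p ∧ 2 ≤ p.1.length ∧ psize p = n ∧
        p.2.headD 0 < p.2.getLastD 0 ∧
        parts1 p.1 = parts2 p.1 + d}.ncard :=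
  stmt7_general d n hd
end

section
/- Every positive integer n has as many partitions with λ₁ > λ₂ + 2λ_m (dimension ≥ 3; for dimension 2, λ₁ > 3λ₂) as partitions with λ₁ > λ₂ + λ_m and k₁ < k_m, and also as many as partitions with 2k₁ < k_m. -/
/-! A partition of dimension at least two is `(a :: (L ++ [c]), k :: (K ++ [e]))`, and `T₁` replaces
`a` by `a - c` and `e` by `k + e`; the size is preserved as `(a - c) * k + c * (k + e) = a * k + c * e`.
On `Tri1` (where `c ≤ a`) it is a bijection onto `M1`, inverted by `a ↦ a + c`, `e ↦ e - k`.
For `p ∈ Tri1`, `T₁ p` lies in `Tri1` iff `λ₁ > λ₂ + 2λ_m`, and has `2k₁ < k_m` iff `k₁ < k_m`.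
So `T₁` maps `{λ₁ > λ₂ + 2λ_m}` onto `Tri1 ∩ M1`, and that set onto `{2k₁ < k_m}`. -/

open List

lemma List.exists_eq_cons_append_singleton {α : Type*} {L : List α} (h : 2 ≤ L.length) :
    ∃ a M c, L = a :: (M ++ [c]) := by
  match L, h with
  | a :: b :: t, _ =>
    exact ⟨a, _, _, congrArg (a :: ·) (dropLast_append_getLast (cons_ne_nil b t)).symm⟩

lemma List.getLastD_cons_append_singleton {α : Type*} (a c d : α) (L : List α) :
    (a :: (L ++ [c])).getLastD d = c := by
  rw [← cons_append, getLastD_concat]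

lemma List.dropLast_cons_append_singleton {α : Type*} (a c : α) (L : List α) :
    (a :: (L ++ [c])).dropLast = a :: L := by
  rw [← cons_append, dropLast_concat]

lemma Set.BijOn.ncard_inter_preimage {α β : Type*} {f : α → β} {s : Set α} {t : Set β}
    (h : Set.BijOn f s t) (u : Set β) : (s ∩ f ⁻¹' u).ncard = (t ∩ u).ncard :=
  (h.inter_mapsTo (Set.mapsTo_preimage f u) Set.inter_subset_right).ncard_eq

lemma IsPart.exists_eq_cons_append {p : List ℕ × List ℕ} (hp : IsPart p) (h2 : 2 ≤ p.1.length) :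
    ∃ a c k e L K, L.length = K.length ∧ p = (a :: (L ++ [c]), k :: (K ++ [e])) := by
  obtain ⟨a, L, c, hL⟩ := exists_eq_cons_append_singleton h2
  obtain ⟨k, K, e, hK⟩ := exists_eq_cons_append_singleton (hp.1 ▸ h2)
  have hlen := hp.1
  rw [hL, hK] at hlen
  exact ⟨a, c, k, e, L, K, by simpa using hlen, Prod.ext hL hK⟩

lemma IsPart.replace_head_last {a a' k e e' : ℕ} {M K : List ℕ}
    (hp : IsPart (a :: M, k :: (K ++ [e]))) (ha : M.headD 0 < a') (he : 0 < e') :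
    IsPart (a' :: M, k :: (K ++ [e'])) := by
  obtain ⟨hlen, hchain, hpos, hmul⟩ := hp
  refine ⟨by simpa using hlen, ?_, ?_, ?_⟩
  · refine isChain_cons.2 ⟨fun y hy => ?_, (isChain_cons.1 hchain).2⟩
    cases M <;> simp_all
  · simp only [mem_cons, forall_eq_or_imp] at hpos ⊢
    exact ⟨by omega, hpos.2⟩
  · simp only [mem_cons, mem_append, forall_eq_or_imp] at hmul ⊢
    grind

lemma psize_cons_append {a c k e : ℕ} {L K : List ℕ} (h : L.length = K.length) :
    psize (a :: (L ++ [c]), k :: (K ++ [e])) = a * k + (zipWith (· * ·) L K).sum + c * e := by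
  simp only [psize, zipWith_cons_cons, zipWith_append h, zipWith_self, map_nil, sum_cons,
    sum_append, sum_nil, add_zero]
  ring

lemma T1map_cons_append (a c k e : ℕ) (L K : List ℕ) :
    T1map (a :: (L ++ [c]), k :: (K ++ [e])) = ((a - c) :: (L ++ [c]), k :: (K ++ [k + e])) := by
  simp only [T1map, T1parts, T1mults, parts1, partsLast, getLastD_cons_append_singleton,
    dropLast_cons_append_singleton]
  rfl

def T1invMap (p : List ℕ × List ℕ) : List ℕ × List ℕ :=
  ((parts1 p.1 + partsLast p.1) :: p.1.tail, p.2.dropLast ++ [p.2.getLastD 0 - p.2.headD 0])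

lemma T1invMap_cons_append (a c k e : ℕ) (L K : List ℕ) :
    T1invMap (a :: (L ++ [c]), k :: (K ++ [e])) = ((a + c) :: (L ++ [c]), k :: (K ++ [e - k])) := by
  simp only [T1invMap, parts1, partsLast, getLastD_cons_append_singleton, dropLast_cons_append_singleton]
  rfl

lemma mem_Tri1_cons_append {a c k e : ℕ} {L K : List ℕ} :
    (a :: (L ++ [c]), k :: (K ++ [e])) ∈ Tri1 ↔
      IsPart (a :: (L ++ [c]), k :: (K ++ [e])) ∧ (L ++ [c]).headD 0 + c < a := by
  have h2 : 2 ≤ (a :: (L ++ [c])).length := by simp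
  simp only [Tri1, Set.mem_ofPred_eq, parts1, parts2, partsLast, getLastD_cons_append_singleton, headD_cons,
    tail_cons, h2, true_and]

lemma mem_M1_cons_append {a c k e : ℕ} {L K : List ℕ} :
    (a :: (L ++ [c]), k :: (K ++ [e])) ∈ M1 ↔ IsPart (a :: (L ++ [c]), k :: (K ++ [e])) ∧ k < e := by
  have h2 : 2 ≤ (a :: (L ++ [c])).length := by simp
  simp only [M1, Set.mem_ofPred_eq, getLastD_cons_append_singleton, headD_cons, h2, true_and]

lemma IsPart.headD_lt {a c : ℕ} {L K : List ℕ} (hp : IsPart (a :: (L ++ [c]), K)) :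
    (L ++ [c]).headD 0 < a :=
  (isChain_cons.1 hp.2.1).1 _ (by cases L <;> rfl)

lemma T1map_mapsTo : Set.MapsTo T1map Tri1 M1 := by
  intro p hp
  obtain ⟨a, c, k, e, L, K, -, rfl⟩ := hp.1.exists_eq_cons_append hp.2.1
  obtain ⟨hpart, hlt⟩ := mem_Tri1_cons_append.1 hp
  have he : 0 < e := hpart.2.2.2 e (by simp)
  rw [T1map_cons_append, mem_M1_cons_append]
  exact ⟨hpart.replace_head_last (by omega) (by omega), by omega⟩

lemma T1invMap_mapsTo : Set.MapsTo T1invMap M1 Tri1 := by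
  intro q hq
  obtain ⟨a, c, k, e, L, K, -, rfl⟩ := hq.1.exists_eq_cons_append hq.2.1
  obtain ⟨hpart, hlt⟩ := mem_M1_cons_append.1 hq
  have hhead := hpart.headD_lt
  rw [T1invMap_cons_append, mem_Tri1_cons_append]
  exact ⟨hpart.replace_head_last (by omega) (by omega), by omega⟩

lemma T1map_invOn : Set.InvOn T1invMap T1map Tri1 M1 := by
  constructor
  · intro p hp
    obtain ⟨a, c, k, e, L, K, -, rfl⟩ := hp.1.exists_eq_cons_append hp.2.1
    have hca : c ≤ a := by have := (mem_Tri1_cons_append.1 hp).2; omega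
    rw [T1map_cons_append, T1invMap_cons_append, Nat.sub_add_cancel hca, Nat.add_sub_cancel_left]
  · intro q hq
    obtain ⟨a, c, k, e, L, K, -, rfl⟩ := hq.1.exists_eq_cons_append hq.2.1
    have hke : k ≤ e := (mem_M1_cons_append.1 hq).2.le
    rw [T1invMap_cons_append, T1map_cons_append, Nat.add_sub_cancel, Nat.add_sub_cancel' hke]

lemma bijOn_T1map_Tri1_M1 : Set.BijOn T1map Tri1 M1 :=
  T1map_invOn.bijOn T1map_mapsTo T1invMap_mapsTo

lemma psize_T1map {p : List ℕ × List ℕ} (hp : p ∈ Tri1) : psize (T1map p) = psize p := by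
  obtain ⟨a, c, k, e, L, K, hLK, rfl⟩ := hp.1.exists_eq_cons_append hp.2.1
  obtain ⟨d, rfl⟩ : ∃ d, a = c + d := Nat.exists_eq_add_of_le (by
    have := (mem_Tri1_cons_append.1 hp).2; omega)
  rw [T1map_cons_append, psize_cons_append hLK, psize_cons_append hLK, Nat.add_sub_cancel_left]
  ring

lemma T1map_mem_Tri1_iff {p : List ℕ × List ℕ} (hp : p ∈ Tri1) :
    T1map p ∈ Tri1 ↔ parts2 p.1 + 2 * partsLast p.1 < parts1 p.1 := by
  have hpart := (T1map_mapsTo hp).1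
  obtain ⟨a, c, k, e, L, K, -, rfl⟩ := hp.1.exists_eq_cons_append hp.2.1
  have hlt := (mem_Tri1_cons_append.1 hp).2
  rw [T1map_cons_append] at hpart ⊢
  simp only [mem_Tri1_cons_append, hpart, true_and, parts1, parts2, partsLast, headD_cons,
    tail_cons, getLastD_cons_append_singleton]
  omega

lemma T1map_two_mul_headD_lt_iff {p : List ℕ × List ℕ} (hp : p ∈ Tri1) :
    2 * (T1map p).2.headD 0 < (T1map p).2.getLastD 0 ↔ p.2.headD 0 < p.2.getLastD 0 := by
  obtain ⟨a, c, k, e, L, K, -, rfl⟩ := hp.1.exists_eq_cons_append hp.2.1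
  simp only [T1map_cons_append, headD_cons, getLastD_cons_append_singleton]
  omega

def Tri2OfSize (n : ℕ) : Set (List ℕ × List ℕ) :=
  {p | IsPart p ∧ 2 ≤ p.1.length ∧ psize p = n ∧ parts2 p.1 + 2 * partsLast p.1 < parts1 p.1}

def Tri1M1OfSize (n : ℕ) : Set (List ℕ × List ℕ) :=
  {p | IsPart p ∧ 2 ≤ p.1.length ∧ psize p = n ∧
    parts2 p.1 + partsLast p.1 < parts1 p.1 ∧ p.2.headD 0 < p.2.getLastD 0}

def M2OfSize (n : ℕ) : Set (List ℕ × List ℕ) :=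
  {p | IsPart p ∧ 2 ≤ p.1.length ∧ psize p = n ∧ 2 * p.2.headD 0 < p.2.getLastD 0}

lemma Tri2OfSize_eq (n : ℕ) : Tri2OfSize n = Tri1 ∩ T1map ⁻¹' (Tri1 ∩ {q | psize q = n}) := by
  ext p
  constructor
  · rintro ⟨hpart, h2, rfl, hlt⟩
    have hp : p ∈ Tri1 := ⟨hpart, h2, by omega⟩
    exact ⟨hp, (T1map_mem_Tri1_iff hp).2 hlt, psize_T1map hp⟩
  · rintro ⟨hp, hT, hsize⟩
    exact ⟨hp.1, hp.2.1, psize_T1map hp ▸ hsize, (T1map_mem_Tri1_iff hp).1 hT⟩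

lemma Tri1M1OfSize_eq_inter (n : ℕ) : Tri1M1OfSize n = M1 ∩ (Tri1 ∩ {q | psize q = n}) := by
  ext p
  simp only [Tri1M1OfSize, M1, Tri1, Set.mem_inter_iff, Set.mem_ofPred_eq]
  tauto

lemma Tri1M1OfSize_eq_preimage (n : ℕ) :
    Tri1M1OfSize n =
      Tri1 ∩ T1map ⁻¹' {q | 2 * q.2.headD 0 < q.2.getLastD 0 ∧ psize q = n} := by
  ext p
  constructor
  · rintro ⟨hpart, h2, rfl, hlt, hk⟩
    have hp : p ∈ Tri1 := ⟨hpart, h2, hlt⟩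
    exact ⟨hp, (T1map_two_mul_headD_lt_iff hp).2 hk, psize_T1map hp⟩
  · rintro ⟨hp, hk, hsize⟩
    exact ⟨hp.1, hp.2.1, psize_T1map hp ▸ hsize, hp.2.2, (T1map_two_mul_headD_lt_iff hp).1 hk⟩

lemma M2OfSize_eq (n : ℕ) :
    M2OfSize n = M1 ∩ {q | 2 * q.2.headD 0 < q.2.getLastD 0 ∧ psize q = n} := by
  ext p
  simp only [M2OfSize, M1, Set.mem_inter_iff, Set.mem_ofPred_eq]
  constructor
  · rintro ⟨hpart, h2, hsize, hk⟩
    exact ⟨⟨hpart, h2, by omega⟩, hk, hsize⟩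
  · rintro ⟨⟨hpart, h2, -⟩, hk, hsize⟩
    exact ⟨hpart, h2, hsize, hk⟩

theorem stmt14_general (n : ℕ) :
    {p : List ℕ × List ℕ | IsPart p ∧ 2 ≤ p.1.length ∧ psize p = n ∧
        parts2 p.1 + 2 * partsLast p.1 < parts1 p.1}.ncard =
      {p : List ℕ × List ℕ | IsPart p ∧ 2 ≤ p.1.length ∧ psize p = n ∧
        parts2 p.1 + partsLast p.1 < parts1 p.1 ∧
        p.2.headD 0 < p.2.getLastD 0}.ncard ∧
    {p : List ℕ × List ℕ | IsPart p ∧ 2 ≤ p.1.length ∧ psize p = n ∧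
        parts2 p.1 + 2 * partsLast p.1 < parts1 p.1}.ncard =
      {p : List ℕ × List ℕ | IsPart p ∧ 2 ≤ p.1.length ∧ psize p = n ∧
        2 * p.2.headD 0 < p.2.getLastD 0}.ncard := by
  change (Tri2OfSize n).ncard = (Tri1M1OfSize n).ncard ∧
    (Tri2OfSize n).ncard = (M2OfSize n).ncard
  have hAB : (Tri2OfSize n).ncard = (Tri1M1OfSize n).ncard := by
    rw [Tri2OfSize_eq, Tri1M1OfSize_eq_inter, bijOn_T1map_Tri1_M1.ncard_inter_preimage]
  have hBC : (Tri1M1OfSize n).ncard = (M2OfSize n).ncard := by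
    rw [Tri1M1OfSize_eq_preimage, M2OfSize_eq, bijOn_T1map_Tri1_M1.ncard_inter_preimage]
  exact ⟨hAB, hAB.trans hBC⟩

theorem stmt14 (n : ℕ) (hn : 0 < n) :
    {p : List ℕ × List ℕ | IsPart p ∧ 2 ≤ p.1.length ∧ psize p = n ∧
        parts2 p.1 + 2 * partsLast p.1 < parts1 p.1}.ncard =
      {p : List ℕ × List ℕ | IsPart p ∧ 2 ≤ p.1.length ∧ psize p = n ∧
        parts2 p.1 + partsLast p.1 < parts1 p.1 ∧
        p.2.headD 0 < p.2.getLastD 0}.ncard ∧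
    {p : List ℕ × List ℕ | IsPart p ∧ 2 ≤ p.1.length ∧ psize p = n ∧
        parts2 p.1 + 2 * partsLast p.1 < parts1 p.1}.ncard =
      {p : List ℕ × List ℕ | IsPart p ∧ 2 ≤ p.1.length ∧ psize p = n ∧
        2 * p.2.headD 0 < p.2.getLastD 0}.ncard :=
  stmt14_general n
end
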